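/- arXiv:2110.15216 — 7 statements merged into one kernel-verified Lean document; each statement's English description precedes it below -/
import Mathlib

section
/- Let G be an abelian group with group topologies τ, τ', τ₁, τ₂ such that τ and τ' are transversal (i.e., their supremum is the discrete topology), τ' ≤ τ₁, and τ' ≤ τ₂. If τ ⊓ τ₁ ≤ τ ⊓ τ₂ (as group topologies), then τ₁ ≤ τ₂. -/
open Filter Set Pointwise Topology

namespace Stmt0Aux

variable {G : Type*} [AddCommGroup G]

/-- The neighborhood filter of `0` for a group topology. -/
def nh (σ : AddGroupTopology G) : Filter G := @nhds G σ.toTopologicalSpace 0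

lemma nh_mono {σ ρ : AddGroupTopology G} (h : σ ≤ ρ) : nh σ ≤ nh ρ :=
  nhds_mono h

lemma le_of_nh {σ ρ : AddGroupTopology G} (h : nh σ ≤ nh ρ) : σ ≤ ρ := by
  rw [← AddGroupTopology.toTopologicalSpace_le, le_iff_nhds]
  intro x
  have hσ : @nhds G σ.toTopologicalSpace x = Filter.map (x + ·) (nh σ) := by
    letI := σ.toTopologicalSpace
    haveI := σ.toIsTopologicalAddGroup
    exact (map_add_left_nhds_zero x).symm
  have hρ : @nhds G ρ.toTopologicalSpace x = Filter.map (x + ·) (nh ρ) := by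
    letI := ρ.toTopologicalSpace
    haveI := ρ.toIsTopologicalAddGroup
    exact (map_add_left_nhds_zero x).symm
  rw [hσ, hρ]
  exact Filter.map_mono h

lemma zero_mem_of_mem_nh {σ : AddGroupTopology G} {V : Set G} (h : V ∈ nh σ) : (0 : G) ∈ V := by
  letI := σ.toTopologicalSpace
  exact mem_of_mem_nhds h

/-- Auxiliary: a set `V₁` in `nh σ` whose sum with itself is inside `V`. -/
lemma exists_half {σ : AddGroupTopology G} {V : Set G} (hV : V ∈ nh σ) :
    ∃ V₁ ∈ nh σ, ∀ v ∈ V₁, ∀ w ∈ V₁, v + w ∈ V := by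
  letI := σ.toTopologicalSpace
  haveI := σ.toIsTopologicalAddGroup
  exact exists_nhds_zero_half hV

lemma exists_neg {σ : AddGroupTopology G} {V : Set G} (hV : V ∈ nh σ) :
    ∃ V₁ ∈ nh σ, ∀ v ∈ V₁, -v ∈ V := by
  letI := σ.toTopologicalSpace
  haveI := σ.toIsTopologicalAddGroup
  have ht : Filter.Tendsto (fun x : G => -x) (𝓝 0) (𝓝 0) := by
    simpa using (continuous_neg (G := G)).tendsto (0 : G)
  exact ⟨(fun x : G => -x) ⁻¹' V, ht hV, fun v hv => hv⟩

/-- The filter basis `{V + W : V ∈ nh σ, W ∈ nh ρ}`, which is a group filter basis. -/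
def sumBasis (σ ρ : AddGroupTopology G) : AddGroupFilterBasis G :=
  addGroupFilterBasisOfComm {S | ∃ V ∈ nh σ, ∃ W ∈ nh ρ, S = V + W}
    ⟨univ + univ, univ, univ_mem, univ, univ_mem, rfl⟩
    (by
      rintro x y ⟨V₁, hV₁, W₁, hW₁, rfl⟩ ⟨V₂, hV₂, W₂, hW₂, rfl⟩
      refine ⟨(V₁ ∩ V₂) + (W₁ ∩ W₂), ⟨V₁ ∩ V₂, inter_mem hV₁ hV₂, W₁ ∩ W₂,
        inter_mem hW₁ hW₂, rfl⟩, ?_⟩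
      rintro a ⟨v, hv, w, hw, rfl⟩
      exact ⟨Set.add_mem_add hv.1 hw.1, Set.add_mem_add hv.2 hw.2⟩)
    (by
      rintro U ⟨V, hV, W, hW, rfl⟩
      exact ⟨0, zero_mem_of_mem_nh hV, 0, zero_mem_of_mem_nh hW, add_zero 0⟩)
    (by
      rintro U ⟨V, hV, W, hW, rfl⟩
      obtain ⟨V₁, hV₁, hVh⟩ := exists_half hV
      obtain ⟨W₁, hW₁, hWh⟩ := exists_half hW
      refine ⟨V₁ + W₁, ⟨V₁, hV₁, W₁, hW₁, rfl⟩, ?_⟩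
      rintro a ⟨x, ⟨v₁, hv₁, w₁, hw₁, rfl⟩, y, ⟨v₂, hv₂, w₂, hw₂, rfl⟩, rfl⟩
      refine ⟨v₁ + v₂, hVh v₁ hv₁ v₂ hv₂, w₁ + w₂, hWh w₁ hw₁ w₂ hw₂, add_add_add_comm v₁ v₂ w₁ w₂⟩)
    (by
      rintro U ⟨V, hV, W, hW, rfl⟩
      obtain ⟨V₁, hV₁, hVn⟩ := exists_neg hV
      obtain ⟨W₁, hW₁, hWn⟩ := exists_neg hW
      refine ⟨V₁ + W₁, ⟨V₁, hV₁, W₁, hW₁, rfl⟩, ?_⟩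
      rintro a ⟨v, hv, w, hw, rfl⟩
      show -(v + w) ∈ V + W
      rw [neg_add]
      exact ⟨-v, hVn v hv, -w, hWn w hw, rfl⟩)

/-- The group topology generated by `sumBasis`. -/
def sumTop (σ ρ : AddGroupTopology G) : AddGroupTopology G :=
  ⟨(sumBasis σ ρ).topology, (sumBasis σ ρ).isTopologicalAddGroup⟩

lemma nh_sumTop (σ ρ : AddGroupTopology G) :
    nh (sumTop σ ρ) = (sumBasis σ ρ).toFilterBasis.filter :=
  AddGroupFilterBasis.nhds_zero_eq _

lemma le_sumTop_left (σ ρ : AddGroupTopology G) : σ ≤ sumTop σ ρ := by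
  apply le_of_nh
  rw [nh_sumTop]
  intro S hS
  obtain ⟨t, ht, hts⟩ := (sumBasis σ ρ).toFilterBasis.mem_filter_iff.1 hS
  obtain ⟨V, hV, W, hW, rfl⟩ := ht
  refine mem_of_superset hV (fun v hv => hts ?_)
  exact ⟨v, hv, 0, zero_mem_of_mem_nh hW, add_zero v⟩

lemma le_sumTop_right (σ ρ : AddGroupTopology G) : ρ ≤ sumTop σ ρ := by
  apply le_of_nh
  rw [nh_sumTop]
  intro S hS
  obtain ⟨t, ht, hts⟩ := (sumBasis σ ρ).toFilterBasis.mem_filter_iff.1 hS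
  obtain ⟨V, hV, W, hW, rfl⟩ := ht
  refine mem_of_superset hW (fun w hw => hts ?_)
  exact ⟨0, zero_mem_of_mem_nh hV, w, hw, zero_add w⟩

end Stmt0Aux

open Stmt0Aux in
/- Mathlib orders group topologies by reverse inclusion: `⊥` is the discrete
topology and `σ ≤ τ` means `σ` is finer than `τ`.  Hence the paper's
"τ ⊔ τ' = discrete" is `τ ⊓ τ' = ⊥`, the paper's "τ' ≤ τ₁" is `τ₁ ≤ τ'`,
the paper's "τ ⊓ τ₁ ≤ τ ⊓ τ₂" is `τ ⊔ τ₂ ≤ τ ⊔ τ₁`, and the paper's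
conclusion "τ₁ ≤ τ₂" is `τ₂ ≤ τ₁`. -/
theorem stmt0 {G : Type*} [AddCommGroup G] (τ τ' τ₁ τ₂ : AddGroupTopology G)
    (htrans : τ ⊓ τ' = ⊥) (h1 : τ₁ ≤ τ') (h2 : τ₂ ≤ τ')
    (hle : τ ⊔ τ₂ ≤ τ ⊔ τ₁) : τ₂ ≤ τ₁ := by
  -- transversality in terms of neighborhood filters of 0
  have hAB : nh τ ⊓ nh τ' = pure (0 : G) := by
    have hbot : (τ ⊓ τ').toTopologicalSpace = (⊥ : TopologicalSpace G) := by
      rw [htrans]; exact AddGroupTopology.toTopologicalSpace_bot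
    have hinf := @nhds_inf G τ.toTopologicalSpace τ'.toTopologicalSpace 0
    rw [← AddGroupTopology.toTopologicalSpace_inf, hbot] at hinf
    show @nhds G τ.toTopologicalSpace 0 ⊓ @nhds G τ'.toTopologicalSpace 0 = pure 0
    rw [← hinf]
    letI : TopologicalSpace G := ⊥
    haveI : DiscreteTopology G := ⟨rfl⟩
    exact congrFun (nhds_discrete G) 0
  -- extract small transversal neighborhoods
  obtain ⟨V₀, hV₀, V₀', hV₀', hVi⟩ :
      ∃ V₀ ∈ nh τ, ∃ V₀' ∈ nh τ', V₀ ∩ V₀' ⊆ ({0} : Set G) := by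
    have h0 : ({0} : Set G) ∈ nh τ ⊓ nh τ' := by rw [hAB]; exact mem_pure.2 rfl
    obtain ⟨V₀, hV₀, V₀', hV₀', heq⟩ := Filter.mem_inf_iff.1 h0
    exact ⟨V₀, hV₀, V₀', hV₀', heq ▸ subset_rfl⟩
  -- a τ'-neighborhood with small differences
  obtain ⟨V'', hV''mem, hV''sub⟩ :
      ∃ V'' ∈ nh τ', ∀ v ∈ V'', ∀ w ∈ V'', v - w ∈ V₀' := by
    letI := τ'.toTopologicalSpace
    haveI := τ'.toIsTopologicalAddGroup
    exact exists_nhds_half_neg hV₀'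
  -- the sum topology is an upper bound of τ and τ₁, hence above τ ⊔ τ₂
  have hsup : τ ⊔ τ₂ ≤ sumTop τ τ₁ :=
    le_trans hle (sup_le (le_sumTop_left τ τ₁) (le_sumTop_right τ τ₁))
  have hnh : nh τ₂ ≤ nh (sumTop τ τ₁) :=
    le_trans (nh_mono le_sup_right) (nh_mono hsup)
  apply le_of_nh
  intro U hU
  have hW1 : U ∩ V'' ∈ nh τ₁ := inter_mem hU (nh_mono h1 hV''mem)
  have hkey : V₀ + (U ∩ V'') ∈ nh τ₂ := by
    apply hnh
    rw [nh_sumTop]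
    exact (sumBasis τ τ₁).toFilterBasis.mem_filter_of_mem ⟨V₀, hV₀, U ∩ V'', hW1, rfl⟩
  have hV''2 : V'' ∈ nh τ₂ := nh_mono h2 hV''mem
  refine mem_of_superset (inter_mem hV''2 hkey) ?_
  rintro x ⟨hxV'', v, hv, w, hw, rfl⟩
  have hvV₀' : v ∈ V₀' := by
    have := hV''sub (v + w) hxV'' w hw.2
    rwa [add_sub_cancel_right] at this
  have hv0 : v = 0 := hVi ⟨hv, hvV₀'⟩
  simpa [hv0] using hw.1
end

section
/- If τ₁ and τ₂ are transversal Hausdorff group topologies on an abelian group G (their supremum is the discrete topology), then the infimum τ₁ ⊓ τ₂ in the lattice of group topologies is also Hausdorff. -/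
open Filter Set Topology Pointwise

/-- In a topological additive group, every nbhd of 0 contains a "difference-small" nbhd. -/
theorem aux_sub_nhds {G : Type*} [AddCommGroup G] [TopologicalSpace G] [IsTopologicalAddGroup G]
    {U : Set G} (hU : U ∈ 𝓝 (0 : G)) :
    ∃ S ∈ 𝓝 (0 : G), ∀ a ∈ S, ∀ b ∈ S, a - b ∈ U := by
  obtain ⟨V, hV, h⟩ := exists_nhds_zero_half hU
  have hnegV : (fun x : G => -x) ⁻¹' V ∈ 𝓝 (0 : G) := by
    have hc : ContinuousAt (fun x : G => -x) 0 := continuous_neg.continuousAt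
    exact hc.preimage_mem_nhds (by simpa using hV)
  refine ⟨V ∩ (fun x : G => -x) ⁻¹' V, inter_mem hV hnegV, ?_⟩
  intro a ha b hb
  have := h a ha.1 (-b) hb.2
  simpa [sub_eq_add_neg] using this

/-- In a T1 space, any nonzero point can be avoided by a nbhd of 0. -/
theorem aux_avoid {G : Type*} [AddGroup G] [TopologicalSpace G] [T1Space G]
    {g : G} (hg : g ≠ 0) : ∃ P ∈ 𝓝 (0 : G), g ∉ P :=
  ⟨{g}ᶜ, isOpen_compl_singleton.mem_nhds (by simpa using (Ne.symm hg)), by simp⟩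

/- Transversal = the join in the fineness order is discrete, i.e. `τ₁ ⊓ τ₂ = ⊥`
in Mathlib's reverse-inclusion order; the paper's infimum is Mathlib's `⊔`. -/
theorem stmt2 {G : Type*} [AddCommGroup G] (τ₁ τ₂ : AddGroupTopology G)
    (h1 : @T2Space G τ₁.toTopologicalSpace) (h2 : @T2Space G τ₂.toTopologicalSpace)
    (htrans : τ₁ ⊓ τ₂ = ⊥) : @T2Space G (τ₁ ⊔ τ₂).toTopologicalSpace := by
  have g₁ : @IsTopologicalAddGroup G τ₁.toTopologicalSpace _ := τ₁.toIsTopologicalAddGroup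
  have g₂ : @IsTopologicalAddGroup G τ₂.toTopologicalSpace _ := τ₂.toIsTopologicalAddGroup
  set N₁ : Filter G := @nhds G τ₁.toTopologicalSpace 0 with hN₁
  set N₂ : Filter G := @nhds G τ₂.toTopologicalSpace 0 with hN₂
  -- extract transversality witnesses
  have htop : τ₁.toTopologicalSpace ⊓ τ₂.toTopologicalSpace = (⊥ : TopologicalSpace G) := by
    have := congrArg AddGroupTopology.toTopologicalSpace htrans
    simpa using this
  have hmem : ({(0 : G)} : Set G) ∈ N₁ ⊓ N₂ := by
    have h0 : @nhds G (τ₁.toTopologicalSpace ⊓ τ₂.toTopologicalSpace) 0 = N₁ ⊓ N₂ := @nhds_inf G τ₁.toTopologicalSpace τ₂.toTopologicalSpace 0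
    have hb : @nhds G (τ₁.toTopologicalSpace ⊓ τ₂.toTopologicalSpace) 0 = pure 0 := by
      rw [htop]
      letI : TopologicalSpace G := ⊥
      haveI : DiscreteTopology G := discreteTopology_bot G
      exact congrFun (nhds_discrete G) 0
    rw [← h0, hb]
    simp
  obtain ⟨U₁, hU₁, U₂, hU₂, hU⟩ := Filter.mem_inf_iff.1 hmem
  have hUcap : ∀ x : G, x ∈ U₁ → x ∈ U₂ → x = 0 := by
    intro x hx1 hx2
    have : x ∈ ({(0 : G)} : Set G) := hU ▸ ⟨hx1, hx2⟩
    simpa using this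
  -- shrink to "difference-small" nbhds
  obtain ⟨S₁, hS₁, hsub₁⟩ : ∃ S ∈ N₁, ∀ a ∈ S, ∀ b ∈ S, a - b ∈ U₁ := by
    letI := τ₁.toTopologicalSpace; haveI := g₁; exact aux_sub_nhds hU₁
  obtain ⟨S₂, hS₂, hsub₂⟩ : ∃ S ∈ N₂, ∀ a ∈ S, ∀ b ∈ S, a - b ∈ U₂ := by
    letI := τ₂.toTopologicalSpace; haveI := g₂; exact aux_sub_nhds hU₂
  -- the group filter basis of sums U + V
  set Bsets : Set (Set G) :=
    {W | ∃ U V : Set G, U ∈ N₁ ∧ V ∈ N₂ ∧ W = U + V} with hBsets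
  have mem0₁ : ∀ {U : Set G}, U ∈ N₁ → (0 : G) ∈ U := fun {U} h => by
    letI := τ₁.toTopologicalSpace; exact mem_of_mem_nhds h
  have mem0₂ : ∀ {V : Set G}, V ∈ N₂ → (0 : G) ∈ V := fun {V} h => by
    letI := τ₂.toTopologicalSpace; exact mem_of_mem_nhds h
  have memB : ∀ {U V : Set G}, U ∈ N₁ → V ∈ N₂ → U + V ∈ Bsets :=
    fun {U V} hU hV => ⟨U, V, hU, hV, rfl⟩
  let B : AddGroupFilterBasis G := by
    refine addGroupFilterBasisOfComm Bsets ⟨univ + univ, memB univ_mem univ_mem⟩ ?_ ?_ ?_ ?_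
    · rintro _ _ ⟨U, V, hUm, hVm, rfl⟩ ⟨U', V', hU'm, hV'm, rfl⟩
      refine ⟨(U ∩ U') + (V ∩ V'), memB (inter_mem hUm hU'm) (inter_mem hVm hV'm), ?_⟩
      rintro x ⟨a, ha, b, hb, rfl⟩
      exact ⟨⟨a, ha.1, b, hb.1, rfl⟩, ⟨a, ha.2, b, hb.2, rfl⟩⟩
    · rintro _ ⟨U, V, hUm, hVm, rfl⟩
      exact ⟨0, mem0₁ hUm, 0, mem0₂ hVm, add_zero 0⟩
    · rintro _ ⟨U, V, hUm, hVm, rfl⟩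
      obtain ⟨U', hU', hU'h⟩ : ∃ W ∈ N₁, ∀ v ∈ W, ∀ w ∈ W, v + w ∈ U := by
        letI := τ₁.toTopologicalSpace; haveI := g₁; exact exists_nhds_zero_half hUm
      obtain ⟨V', hV', hV'h⟩ : ∃ W ∈ N₂, ∀ v ∈ W, ∀ w ∈ W, v + w ∈ V := by
        letI := τ₂.toTopologicalSpace; haveI := g₂; exact exists_nhds_zero_half hVm
      refine ⟨U' + V', memB hU' hV', ?_⟩
      rintro _ ⟨_, ⟨a, ha, b, hb, rfl⟩, _, ⟨a', ha', b', hb', rfl⟩, rfl⟩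
      exact ⟨a + a', hU'h a ha a' ha', b + b', hV'h b hb b' hb', add_add_add_comm a a' b b'⟩
    · rintro _ ⟨U, V, hUm, hVm, rfl⟩
      have hnU : (fun x : G => -x) ⁻¹' U ∈ N₁ := by
        letI := τ₁.toTopologicalSpace
        haveI := g₁
        have hc : ContinuousAt (fun x : G => -x) 0 := continuous_neg.continuousAt
        exact hc.preimage_mem_nhds (by simpa using hUm)
      have hnV : (fun x : G => -x) ⁻¹' V ∈ N₂ := by
        letI := τ₂.toTopologicalSpace
        haveI := g₂
        have hc : ContinuousAt (fun x : G => -x) 0 := continuous_neg.continuousAt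
        exact hc.preimage_mem_nhds (by simpa using hVm)
      refine ⟨(fun x : G => -x) ⁻¹' U + (fun x : G => -x) ⁻¹' V, memB hnU hnV, ?_⟩
      rintro _ ⟨a, ha, b, hb, rfl⟩
      exact ⟨-a, ha, -b, hb, (neg_add a b).symm⟩
  have hBmem : ∀ W : Set G, W ∈ B ↔ W ∈ Bsets := fun W => Iff.rfl
  -- the candidate group topology
  set τ : AddGroupTopology G :=
    { toTopologicalSpace := B.topology
      toIsTopologicalAddGroup := B.isTopologicalAddGroup } with hτ
  -- τ is coarser than both τ₁ and τ₂ (i.e. an upper bound in Mathlib's order)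
  have h1le : τ₁ ≤ τ := by
    show τ₁.toTopologicalSpace ≤ B.topology
    rw [le_iff_nhds]
    intro x
    rw [(B.nhds_hasBasis x).ge_iff]
    intro W hW
    obtain ⟨U, V, hUm, hVm, rfl⟩ := (hBmem W).1 hW
    letI := τ₁.toTopologicalSpace
    haveI := g₁
    have h1x : (fun y => x + y) '' U ∈ 𝓝 x := by
      rw [← map_add_left_nhds_zero x]
      exact image_mem_map hUm
    refine Filter.mem_of_superset h1x ?_
    rintro _ ⟨a, ha, rfl⟩
    exact ⟨a + 0, ⟨a, ha, 0, mem0₂ hVm, rfl⟩, by simp⟩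
  have h2le : τ₂ ≤ τ := by
    show τ₂.toTopologicalSpace ≤ B.topology
    rw [le_iff_nhds]
    intro x
    rw [(B.nhds_hasBasis x).ge_iff]
    intro W hW
    obtain ⟨U, V, hUm, hVm, rfl⟩ := (hBmem W).1 hW
    letI := τ₂.toTopologicalSpace
    haveI := g₂
    have h2x : (fun y => x + y) '' V ∈ 𝓝 x := by
      rw [← map_add_left_nhds_zero x]
      exact image_mem_map hVm
    refine Filter.mem_of_superset h2x ?_
    rintro _ ⟨b, hb, rfl⟩
    exact ⟨0 + b, ⟨0, mem0₁ hUm, b, hb, rfl⟩, by simp⟩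
  have hsup : τ₁ ⊔ τ₂ ≤ τ := sup_le h1le h2le
  -- τ is T2
  have hT2 : @T2Space G B.topology := by
    letI := B.topology
    haveI : IsTopologicalAddGroup G := B.isTopologicalAddGroup
    apply IsTopologicalAddGroup.t2Space_of_zero_sep
    intro g hg
    -- find V₁ ∈ N₁, V₂ ∈ N₂ with g ∉ V₁ + V₂
    have key : ∃ V₁ ∈ N₁, ∃ V₂ ∈ N₂, g ∉ V₁ + V₂ := by
      by_contra hcon
      push_neg at hcon
      obtain ⟨a, ha, b, hb, hab⟩ := hcon S₁ hS₁ S₂ hS₂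
      have same : ∀ V₁ ∈ N₁, ∀ V₂ ∈ N₂, V₁ ⊆ S₁ → V₂ ⊆ S₂ →
          ∀ a' ∈ V₁, ∀ b' ∈ V₂, a' + b' = g → a' = a ∧ b' = b := by
        intro V₁ hV₁ V₂ hV₂ hV₁S hV₂S a' ha' b' hb' heq
        have heq' : a + b = a' + b' := hab.trans heq.symm
        have h1d : a - a' ∈ U₁ := hsub₁ a ha a' (hV₁S ha')
        have h2d : a - a' ∈ U₂ := by
          have hd : a - a' = b' - b := by
            rw [sub_eq_sub_iff_add_eq_add, heq']
            abel
          rw [hd]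
          exact hsub₂ b' (hV₂S hb') b hb
        have h0 : a = a' := sub_eq_zero.1 (hUcap _ h1d h2d)
        refine ⟨h0.symm, ?_⟩
        rw [h0] at heq'
        exact (add_left_cancel heq').symm
      -- a = 0
      have ha0 : a = 0 := by
        by_contra hane
        obtain ⟨P, hP, hgP⟩ : ∃ P ∈ N₁, a ∉ P := by
          letI := τ₁.toTopologicalSpace
          haveI := h1
          exact aux_avoid hane
        obtain ⟨a', ha', b', hb', heq⟩ := hcon (S₁ ∩ P) (inter_mem hS₁ hP) S₂ hS₂
        obtain ⟨haa, -⟩ := same (S₁ ∩ P) (inter_mem hS₁ hP) S₂ hS₂ inter_subset_left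
          (subset_refl _) a' ha' b' hb' heq
        exact hgP (haa ▸ ha'.2)
      have hb0 : b = 0 := by
        by_contra hbne
        obtain ⟨P, hP, hgP⟩ : ∃ P ∈ N₂, b ∉ P := by
          letI := τ₂.toTopologicalSpace
          haveI := h2
          exact aux_avoid hbne
        obtain ⟨a', ha', b', hb', heq⟩ := hcon S₁ hS₁ (S₂ ∩ P) (inter_mem hS₂ hP)
        obtain ⟨-, hbb⟩ := same S₁ hS₁ (S₂ ∩ P) (inter_mem hS₂ hP) (subset_refl _)
          inter_subset_left a' ha' b' hb' heq
        exact hgP (hbb ▸ hb'.2)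
      rw [ha0, hb0] at hab
      simp at hab
      exact hg hab.symm
    obtain ⟨V₁, hV₁, V₂, hV₂, hgnot⟩ := key
    exact ⟨V₁ + V₂, B.mem_nhds_zero ((hBmem _).2 (memB hV₁ hV₂)), hgnot⟩
  exact t2Space_antitone (AddGroupTopology.toTopologicalSpace_le.2 hsup) hT2
end

section
/- Let G be an abelian group, τ and τ' transversal group topologies on G (τ ⊔ τ' is discrete), and let τ₁, τ₂ be group topologies with τ' ≤ τ₁ and τ' ≤ τ₂. If τ₁ ≠ τ₂ then τ ⊓ τ₁ ≠ τ ⊓ τ₂. -/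
open Filter Set Pointwise

section Aux

variable {G : Type*} [AddCommGroup G]

theorem half_nhds (τ : AddGroupTopology G) {U : Set G}
    (hU : U ∈ @nhds G τ.toTopologicalSpace 0) :
    ∃ V ∈ @nhds G τ.toTopologicalSpace 0, ∀ v ∈ V, ∀ w ∈ V, v + w ∈ U := by
  letI := τ.toTopologicalSpace; haveI := τ.toIsTopologicalAddGroup
  exact exists_nhds_zero_half hU

theorem neg_nhds (τ : AddGroupTopology G) {U : Set G}
    (hU : U ∈ @nhds G τ.toTopologicalSpace 0) : -U ∈ @nhds G τ.toTopologicalSpace 0 := by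
  letI := τ.toTopologicalSpace; haveI := τ.toIsTopologicalAddGroup
  exact neg_mem_nhds_zero _ hU

theorem sub_nhds (τ : AddGroupTopology G) {U : Set G}
    (hU : U ∈ @nhds G τ.toTopologicalSpace 0) :
    ∃ V ∈ @nhds G τ.toTopologicalSpace 0, ∀ v ∈ V, ∀ w ∈ V, v - w ∈ U := by
  letI := τ.toTopologicalSpace; haveI := τ.toIsTopologicalAddGroup
  exact exists_nhds_half_neg hU

/-- The filter basis of sets `U + W` with `U` a `τ`-neighborhood of `0` and `W` a
`τ₁`-neighborhood of `0`.  This generates a group topology coarser than both. -/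
noncomputable def sumNhdsBasis (τ τ₁ : AddGroupTopology G) : AddGroupFilterBasis G :=
  addGroupFilterBasisOfComm
    {s : Set G | ∃ U ∈ @nhds G τ.toTopologicalSpace 0,
      ∃ W ∈ @nhds G τ₁.toTopologicalSpace 0, s = U + W}
    ⟨univ + univ, univ, univ_mem, univ, univ_mem, rfl⟩
    (by
      rintro _ _ ⟨U, hU, W, hW, rfl⟩ ⟨U', hU', W', hW', rfl⟩
      refine ⟨(U ∩ U') + (W ∩ W'), ⟨U ∩ U', inter_mem hU hU', W ∩ W', inter_mem hW hW', rfl⟩, ?_⟩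
      rintro _ ⟨u, hu, w, hw, rfl⟩
      exact ⟨⟨u, hu.1, w, hw.1, rfl⟩, ⟨u, hu.2, w, hw.2, rfl⟩⟩)
    (by
      rintro _ ⟨U, hU, W, hW, rfl⟩
      have h1 : (0 : G) ∈ U := by
        letI := τ.toTopologicalSpace; exact mem_of_mem_nhds hU
      have h2 : (0 : G) ∈ W := by
        letI := τ₁.toTopologicalSpace; exact mem_of_mem_nhds hW
      exact ⟨0, h1, 0, h2, add_zero 0⟩)
    (by
      rintro _ ⟨U, hU, W, hW, rfl⟩
      obtain ⟨V, hV, hVU⟩ := half_nhds τ hU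
      obtain ⟨V', hV', hV'W⟩ := half_nhds τ₁ hW
      refine ⟨V + V', ⟨V, hV, V', hV', rfl⟩, ?_⟩
      rintro _ ⟨_, ⟨v, hv, v', hv', rfl⟩, _, ⟨w, hw, w', hw', rfl⟩, rfl⟩
      exact ⟨v + w, hVU v hv w hw, v' + w', hV'W v' hv' w' hw', add_add_add_comm _ _ _ _⟩)
    (by
      rintro _ ⟨U, hU, W, hW, rfl⟩
      refine ⟨(-U) + (-W), ⟨-U, neg_nhds τ hU, -W, neg_nhds τ₁ hW, rfl⟩, ?_⟩
      rintro _ ⟨u, hu, w, hw, rfl⟩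
      show -(u + w) ∈ U + W
      exact ⟨-u, by simpa using hu, -w, by simpa using hw, by abel⟩)

/-- The group topology generated by the `U + W` basis. -/
noncomputable def sumTop (τ τ₁ : AddGroupTopology G) : AddGroupTopology G :=
  { toTopologicalSpace := (sumNhdsBasis τ τ₁).topology
    toIsTopologicalAddGroup := (sumNhdsBasis τ τ₁).isTopologicalAddGroup }

theorem sumTop_le_left (τ τ₁ : AddGroupTopology G) : τ ≤ sumTop τ τ₁ := by
  rw [← AddGroupTopology.toTopologicalSpace_le]
  intro O hO
  have hmem : ∀ x ∈ O, O ∈ @nhds G τ.toTopologicalSpace x := by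
    intro x hx
    have hO' : O ∈ @nhds G (sumTop τ τ₁).toTopologicalSpace x := by
      letI := (sumTop τ τ₁).toTopologicalSpace
      exact IsOpen.mem_nhds hO hx
    obtain ⟨V, hV, hVO⟩ := ((sumNhdsBasis τ τ₁).nhds_hasBasis x).mem_iff.1 hO'
    obtain ⟨U, hU, W, hW, rfl⟩ := hV
    letI := τ.toTopologicalSpace; haveI := τ.toIsTopologicalAddGroup
    rw [← map_add_left_nhds_zero x, mem_map]
    refine mem_of_superset hU fun u hu => ?_
    have h0W : (0 : G) ∈ W := by
      letI := τ₁.toTopologicalSpace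
      exact mem_of_mem_nhds hW
    exact hVO ⟨u + 0, ⟨u, hu, 0, h0W, rfl⟩, by simp⟩
  letI := τ.toTopologicalSpace
  exact isOpen_iff_mem_nhds.2 hmem

theorem sumTop_le_right (τ τ₁ : AddGroupTopology G) : τ₁ ≤ sumTop τ τ₁ := by
  rw [← AddGroupTopology.toTopologicalSpace_le]
  intro O hO
  have hmem : ∀ x ∈ O, O ∈ @nhds G τ₁.toTopologicalSpace x := by
    intro x hx
    have hO' : O ∈ @nhds G (sumTop τ τ₁).toTopologicalSpace x := by
      letI := (sumTop τ τ₁).toTopologicalSpace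
      exact IsOpen.mem_nhds hO hx
    obtain ⟨V, hV, hVO⟩ := ((sumNhdsBasis τ τ₁).nhds_hasBasis x).mem_iff.1 hO'
    obtain ⟨U, hU, W, hW, rfl⟩ := hV
    letI := τ₁.toTopologicalSpace; haveI := τ₁.toIsTopologicalAddGroup
    rw [← map_add_left_nhds_zero x, mem_map]
    refine mem_of_superset hW fun w hw => ?_
    have h0U : (0 : G) ∈ U := by
      letI := τ.toTopologicalSpace
      exact mem_of_mem_nhds hU
    exact hVO ⟨0 + w, ⟨0, h0U, w, hw, rfl⟩, by simp⟩
  letI := τ₁.toTopologicalSpace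
  exact isOpen_iff_mem_nhds.2 hmem

theorem sum_mem_nhds_sup (τ τ₁ : AddGroupTopology G) {U W : Set G}
    (hU : U ∈ @nhds G τ.toTopologicalSpace 0) (hW : W ∈ @nhds G τ₁.toTopologicalSpace 0) :
    U + W ∈ @nhds G (τ ⊔ τ₁).toTopologicalSpace 0 := by
  have hle : τ ⊔ τ₁ ≤ sumTop τ τ₁ := sup_le (sumTop_le_left τ τ₁) (sumTop_le_right τ τ₁)
  have hle' : (τ ⊔ τ₁).toTopologicalSpace ≤ (sumTop τ τ₁).toTopologicalSpace := hle
  refine nhds_mono hle' ?_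
  show U + W ∈ @nhds G (sumNhdsBasis τ τ₁).topology 0
  exact (sumNhdsBasis τ τ₁).mem_nhds_zero ⟨U, hU, W, hW, rfl⟩

/-- Key recovery lemma: if `τ ⊓ τ' = ⊥` and `τ₁ ≤ τ'` then `(τ ⊔ τ₁) ⊓ τ' = τ₁`. -/
theorem recover (τ τ' τ₁ : AddGroupTopology G) (htrans : τ ⊓ τ' = ⊥) (h1 : τ₁ ≤ τ') :
    (τ ⊔ τ₁) ⊓ τ' = τ₁ := by
  have hle : τ₁ ≤ (τ ⊔ τ₁) ⊓ τ' := le_inf le_sup_right h1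
  refine le_antisymm ?_ hle
  rw [← AddGroupTopology.toTopologicalSpace_le]
  have hnle : @nhds G ((τ ⊔ τ₁) ⊓ τ').toTopologicalSpace 0 ≤
      @nhds G τ₁.toTopologicalSpace 0 := by
    intro Wset hWset
    have hbot : τ.toTopologicalSpace ⊓ τ'.toTopologicalSpace = (⊥ : TopologicalSpace G) := by
      have := congrArg AddGroupTopology.toTopologicalSpace htrans
      simpa using this
    have h0 : ({0} : Set G) ∈ @nhds G τ.toTopologicalSpace 0 ⊓ @nhds G τ'.toTopologicalSpace 0 := by
      rw [← _root_.nhds_inf, hbot]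
      letI : TopologicalSpace G := ⊥
      haveI := discreteTopology_bot G
      exact IsOpen.mem_nhds (isOpen_discrete _) rfl
    obtain ⟨U, hU, V, hV, hUV⟩ := Filter.mem_inf_iff.1 h0
    obtain ⟨V', hV', hV'V⟩ := sub_nhds τ' hV
    have hV'1 : V' ∈ @nhds G τ₁.toTopologicalSpace 0 := nhds_mono h1 hV'
    have hW0 : Wset ∩ V' ∈ @nhds G τ₁.toTopologicalSpace 0 := inter_mem hWset hV'1
    have hkey : (U + (Wset ∩ V')) ∩ V' ⊆ Wset := by
      rintro x ⟨⟨u, hu, w, hw, rfl⟩, hxV'⟩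
      have huV : u ∈ V := by
        have : (u + w) - w ∈ V := hV'V _ hxV' _ hw.2
        simpa using this
      have hu0 : u = 0 := by
        have hmem : u ∈ U ∩ V := ⟨hu, huV⟩
        rw [← hUV] at hmem
        exact hmem
      simpa [hu0] using hw.1
    have hA : U + (Wset ∩ V') ∈ @nhds G (τ ⊔ τ₁).toTopologicalSpace 0 :=
      sum_mem_nhds_sup τ τ₁ hU hW0
    have hmem : (U + (Wset ∩ V')) ∩ V' ∈ @nhds G ((τ ⊔ τ₁) ⊓ τ').toTopologicalSpace 0 := by
      rw [AddGroupTopology.toTopologicalSpace_inf, _root_.nhds_inf]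
      exact inter_mem_inf hA hV'
    exact mem_of_superset hmem hkey
  have hnge : @nhds G τ₁.toTopologicalSpace 0 ≤
      @nhds G ((τ ⊔ τ₁) ⊓ τ').toTopologicalSpace 0 := nhds_mono hle
  have heq : ((τ ⊔ τ₁) ⊓ τ').toTopologicalSpace = τ₁.toTopologicalSpace :=
    IsTopologicalAddGroup.ext ((τ ⊔ τ₁) ⊓ τ').toIsTopologicalAddGroup τ₁.toIsTopologicalAddGroup
      (le_antisymm hnle hnge)
  exact le_of_eq heq

end Aux

/- Paper conventions translated to Mathlib's reverse-inclusion order: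
transversal is `τ ⊓ τ' = ⊥`, "τ' ≤ τᵢ" is `τᵢ ≤ τ'`, and the paper's
`τ ⊓ τᵢ` is `τ ⊔ τᵢ`. -/
theorem stmt5 {G : Type*} [AddCommGroup G] (τ τ' τ₁ τ₂ : AddGroupTopology G)
    (htrans : τ ⊓ τ' = ⊥) (h1 : τ₁ ≤ τ') (h2 : τ₂ ≤ τ')
    (hne : τ₁ ≠ τ₂) : τ ⊔ τ₁ ≠ τ ⊔ τ₂ := by
  intro h
  apply hne
  rw [← recover τ τ' τ₁ htrans h1, ← recover τ τ' τ₂ htrans h2, h]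
end

section
/- Let G be an uncountable abelian group and H a countable subgroup of G. Then there exists a subgroup S of G with |S| = |G| and S ∩ H = {0}. -/
private lemma countable_of_fibers {α β : Type*} [Countable β] (f : α → β)
    (h : ∀ b, Countable {a // f a = b}) : Countable α := by
  haveI := h
  exact Countable.of_equiv _ (Equiv.sigmaFiberEquiv f)

/-- the `n`-torsion additive subgroup -/
private def torA {G' : Type*} [AddCommGroup G'] (n : ℕ) : AddSubgroup G' where
  carrier := {y | n • y = 0}
  zero_mem' := smul_zero n
  add_mem' := by
    intro a b ha hb
    simp only [Set.mem_setOf_eq, smul_add] at *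
    rw [ha, hb, add_zero]
  neg_mem' := by
    intro a ha
    simp only [Set.mem_setOf_eq, smul_neg] at *
    rw [ha, neg_zero]

private lemma essential_submodule_top {K M : Type*} [DivisionRing K] [AddCommGroup M]
    [Module K M] (W : Submodule K M)
    (hess : ∀ z : M, z ≠ 0 → ∃ n : ℤ, n • z ∈ W ∧ n • z ≠ 0) (x : M) : x ∈ W := by
  obtain ⟨W', hcompl⟩ := W.exists_isCompl
  have hW' : ∀ z : M, z ∈ W' → z = 0 := by
    intro z hzW'
    by_contra hz0
    obtain ⟨n, hnmem, hnne⟩ := hess z hz0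
    exact hnne (Submodule.disjoint_def.mp hcompl.disjoint _ hnmem (zsmul_mem hzW' n))
  have hx' : x ∈ W ⊔ W' := by
    rw [hcompl.sup_eq_top]
    exact Submodule.mem_top
  obtain ⟨y, hyW, z, hzW', hyz⟩ := Submodule.mem_sup.mp hx'
  rw [hW' z hzW', add_zero] at hyz
  rwa [← hyz]

private lemma essential_countable {G' : Type*} [AddCommGroup G'] (H' : AddSubgroup G')
    (hc : Countable H')
    (hess : ∀ x : G', x ≠ 0 → ∃ n : ℤ, n • x ∈ H' ∧ n • x ≠ 0) : Countable G' := by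
  -- Step 1: prime torsion is contained in H'
  have prime_tor : ∀ p : ℕ, p.Prime → ∀ x : G', p • x = 0 → x ∈ H' := by
    intro p hp x hx
    haveI : Fact p.Prime := ⟨hp⟩
    letI : Module (ZMod p) (torA (G' := G') p) := AddCommGroup.zmodModule (by
      rintro ⟨y, hy⟩
      ext
      simpa using (show p • y = 0 from hy))
    have hessV : ∀ z : (torA (G' := G') p), z ≠ 0 →
        ∃ n : ℤ, n • z ∈ H'.addSubgroupOf (torA (G' := G') p) ∧ n • z ≠ 0 := by
      intro z hz0
      obtain ⟨n, hnmem, hnne⟩ := hess (z : G') (fun h => hz0 (Subtype.ext h))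
      refine ⟨n, ?_, ?_⟩
      · rw [AddSubgroup.mem_addSubgroupOf]
        simpa using hnmem
      · intro h0
        apply hnne
        have := congrArg (fun t : (torA (G' := G') p) => (t : G')) h0
        simpa using this
    have hxx : x ∈ (torA (G' := G') p) := hx
    have key := essential_submodule_top
      (AddSubgroup.toZModSubmodule p (H'.addSubgroupOf (torA (G' := G') p)))
      (fun z hz => hessV z hz) ⟨x, hxx⟩
    rwa [AddSubgroup.mem_toZModSubmodule, AddSubgroup.mem_addSubgroupOf] at key
  -- countability of prime torsion
  have ptor_ct : ∀ p : ℕ, p.Prime → Countable {x : G' // p • x = 0} := by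
    intro p hp
    have hinj : Function.Injective
        (fun x : {x : G' // p • x = 0} => (⟨x.1, prime_tor p hp x.1 x.2⟩ : H')) := by
      intro a b hab
      have := congrArg (fun y : H' => (y : G')) hab
      exact Subtype.ext this
    exact hinj.countable
  -- Step 2: all torsion levels are countable
  have tor : ∀ n : ℕ, 0 < n → Countable {x : G' // n • x = 0} := by
    intro n
    induction n using Nat.strong_induction_on with
    | _ n ih =>
      intro hn
      rcases eq_or_lt_of_le (show 1 ≤ n from hn) with h1 | h1
      · -- n = 1
        obtain rfl : n = 1 := h1.symm
        have : Subsingleton {x : G' // 1 • x = 0} := ⟨by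
          rintro ⟨a, ha⟩ ⟨b, hb⟩
          rw [one_nsmul] at ha hb
          exact Subtype.ext (ha.trans hb.symm)⟩
        exact Subsingleton.to_countable
      · -- 1 < n
        obtain ⟨p, hp, m, rfl⟩ : ∃ p, p.Prime ∧ ∃ m, n = p * m := by
          obtain ⟨p, hp, hpd⟩ := Nat.exists_prime_and_dvd (by omega : n ≠ 1)
          exact ⟨p, hp, hpd⟩
        have hm : 0 < m := by
          rcases Nat.eq_zero_or_pos m with rfl | h
          · simp at hn
          · exact h
        have hmn : m < p * m := by nlinarith [hp.two_le]
        haveI hCm := ih m hmn hm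
        haveI hCp := ptor_ct p hp
        set f : {x : G' // (p * m) • x = 0} → {y : G' // p • y = 0} :=
          fun x => ⟨m • x.1, by rw [smul_smul]; exact x.2⟩ with hfdef
        apply countable_of_fibers f
        intro b
        by_cases hne : Nonempty {a // f a = b}
        · obtain ⟨a₀⟩ := hne
          have hinj : Function.Injective
              (fun a : {a // f a = b} =>
                (⟨a.1.1 - a₀.1.1, by
                  have h1 : m • a.1.1 = b.1 := congrArg Subtype.val a.2
                  have h2 : m • a₀.1.1 = b.1 := congrArg Subtype.val a₀.2
                  rw [smul_sub, h1, h2, sub_self]⟩ : {z : G' // m • z = 0})) := by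
            intro u v huv
            have := congrArg Subtype.val huv
            simp only [sub_left_inj] at this
            exact Subtype.ext (Subtype.ext this)
          exact hinj.countable
        · haveI := not_nonempty_iff.mp hne
          infer_instance
  -- Step 3: nonzero elements are countable via the choice map
  have hess' : ∀ x : {x : G' // x ≠ 0}, ∃ n : ℤ, n • x.1 ∈ H' ∧ n • x.1 ≠ 0 :=
    fun x => hess x.1 x.2
  choose nn hmem hne using hess'
  set φ : {x : G' // x ≠ 0} → ℤ × H' :=
    fun x => (nn x, ⟨nn x • x.1, hmem x⟩) with hφdef
  have hct : Countable {x : G' // x ≠ 0} := by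
    apply countable_of_fibers φ
    rintro ⟨k, h⟩
    by_cases hne' : Nonempty {a // φ a = (k, h)}
    · obtain ⟨a₀⟩ := hne'
      have hk : k = nn a₀.1 := (congrArg Prod.fst a₀.2).symm
      have hk0 : k ≠ 0 := by
        rintro rfl
        apply hne a₀.1
        rw [← hk, zero_zsmul]
      have hkn : 0 < k.natAbs := Int.natAbs_pos.mpr hk0
      haveI := tor k.natAbs hkn
      have key : ∀ a : {a // φ a = (k, h)}, k • a.1.1 = h.1 := by
        rintro ⟨⟨x, hx0⟩, hax⟩
        show k • x = (h : G')
        have h1 : nn ⟨x, hx0⟩ = k := congrArg Prod.fst hax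
        have h2 := congrArg (fun y : ℤ × H' => ((y.2 : G'))) hax
        simp only [hφdef] at h2
        rw [← h1]
        exact h2
      have hinj : Function.Injective
          (fun a : {a // φ a = (k, h)} =>
            (⟨a.1.1 - a₀.1.1, by
              have hz : k • (a.1.1 - a₀.1.1) = 0 := by
                rw [smul_sub, key a, key a₀, sub_self]
              rcases Int.natAbs_eq k with he | he
              · rw [← natCast_zsmul, ← he, hz]
              · rw [← natCast_zsmul]
                have : (-(k.natAbs : ℤ)) • (a.1.1 - a₀.1.1) = 0 := by rw [← he, hz]
                rw [neg_zsmul, neg_eq_zero] at this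
                exact this⟩ : {z : G' // k.natAbs • z = 0})) := by
        intro u v huv
        have := congrArg Subtype.val huv
        simp only [sub_left_inj] at this
        exact Subtype.ext (Subtype.ext this)
      exact hinj.countable
    · haveI := not_nonempty_iff.mp hne'
      infer_instance
  classical
  have hzero : Subsingleton {x : G' // x = 0} := ⟨by
    rintro ⟨a, ha⟩ ⟨b, hb⟩
    exact Subtype.ext (ha.trans hb.symm)⟩
  exact Countable.of_equiv _ (Equiv.sumCompl (· = (0 : G')))

theorem stmt6 {G : Type*} [AddCommGroup G] [Uncountable G]
    (H : AddSubgroup G) (hH : Countable H) :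
    ∃ S : AddSubgroup G, Cardinal.mk S = Cardinal.mk G ∧ S ⊓ H = ⊥ := by
  -- Zorn's lemma: a maximal subgroup intersecting H trivially
  obtain ⟨S, -, hSmem, hSmax⟩ :=
    zorn_le_nonempty₀ {S : AddSubgroup G | S ⊓ H = ⊥}
      (fun c hc hchain T hT => by
        refine ⟨sSup c, ?_, fun z hz => le_sSup hz⟩
        rw [Set.mem_setOf_eq, eq_bot_iff]
        intro x hx
        rw [AddSubgroup.mem_inf] at hx
        obtain ⟨U, hUc, hxU⟩ :=
          (AddSubgroup.mem_sSup_of_directedOn ⟨T, hT⟩ hchain.directedOn).mp hx.1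
        have : x ∈ U ⊓ H := ⟨hxU, hx.2⟩
        rwa [hc hUc] at this) ⊥ (by simp)
  refine ⟨S, ?_, hSmem⟩
  -- the image of H in the quotient
  set H' : AddSubgroup (G ⧸ S) := H.map (QuotientAddGroup.mk' S) with hH'def
  have hH'c : Countable H' := by
    have hsurj : Function.Surjective
        (fun h : H => (⟨QuotientAddGroup.mk' S h.1,
          AddSubgroup.mem_map_of_mem _ h.2⟩ : H')) := by
      rintro ⟨y, g, hg, rfl⟩
      exact ⟨⟨g, hg⟩, rfl⟩
    exact hsurj.countable
  -- essentiality
  have hess : ∀ x : G ⧸ S, x ≠ 0 → ∃ n : ℤ, n • x ∈ H' ∧ n • x ≠ 0 := by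
    intro x hx
    obtain ⟨g, rfl⟩ := QuotientAddGroup.mk'_surjective S x
    have hgS : g ∉ S := by
      intro h
      exact hx ((QuotientAddGroup.eq_zero_iff g).mpr h)
    have hne : (S ⊔ AddSubgroup.closure {g}) ⊓ H ≠ ⊥ := by
      intro h
      have hle : S ⊔ AddSubgroup.closure {g} ≤ S := hSmax h le_sup_left
      exact hgS (hle (le_sup_right (a := S)
        (AddSubgroup.subset_closure (Set.mem_singleton g))))
    rw [Ne, AddSubgroup.eq_bot_iff_forall] at hne
    push_neg at hne
    obtain ⟨h, hhmem, hh0⟩ := hne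
    rw [AddSubgroup.mem_inf] at hhmem
    obtain ⟨s, hs, z, hz, hszh⟩ := AddSubgroup.mem_sup.mp hhmem.1
    obtain ⟨k, hk⟩ := AddSubgroup.mem_closure_singleton.mp hz
    have hhS : h ∉ S := by
      intro hmem
      have : h ∈ S ⊓ H := ⟨hmem, hhmem.2⟩
      rw [hSmem] at this
      exact hh0 this
    have hs0 : (QuotientAddGroup.mk' S) s = 0 := (QuotientAddGroup.eq_zero_iff s).mpr hs
    have hmk : (k • (QuotientAddGroup.mk' S) g : G ⧸ S) = (QuotientAddGroup.mk' S) h := by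
      rw [← hszh, map_add, ← hk, map_zsmul, hs0, zero_add]
    refine ⟨k, ?_, ?_⟩
    · rw [hmk]
      exact AddSubgroup.mem_map_of_mem _ hhmem.2
    · rw [hmk]
      intro h0
      exact hhS ((QuotientAddGroup.eq_zero_iff h).mp h0)
  haveI hQc : Countable (G ⧸ S) := essential_countable H' hH'c hess
  -- cardinal arithmetic
  have e : Cardinal.mk G = Cardinal.mk (G ⧸ S) * Cardinal.mk S := by
    calc Cardinal.mk G = Cardinal.mk ((G ⧸ S) × S) :=
          Cardinal.mk_congr AddSubgroup.addGroupEquivQuotientProdAddSubgroup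
      _ = Cardinal.mk (G ⧸ S) * Cardinal.mk S := by
          rw [Cardinal.mk_prod, Cardinal.lift_id, Cardinal.lift_id]
  have hq : Cardinal.mk (G ⧸ S) ≤ Cardinal.aleph0 := Cardinal.mk_le_aleph0
  have hGu : Cardinal.aleph0 < Cardinal.mk G := Cardinal.aleph0_lt_mk
  have hSbig : Cardinal.aleph0 ≤ Cardinal.mk S := by
    by_contra hlt
    push_neg at hlt
    have : Cardinal.mk G ≤ Cardinal.aleph0 := by
      calc Cardinal.mk G = Cardinal.mk (G ⧸ S) * Cardinal.mk S := e
        _ ≤ Cardinal.aleph0 * Cardinal.aleph0 := mul_le_mul' hq hlt.le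
        _ = Cardinal.aleph0 := Cardinal.aleph0_mul_aleph0
    exact absurd hGu (not_lt.mpr this)
  have h1 : Cardinal.mk G ≤ Cardinal.mk S := by
    calc Cardinal.mk G = Cardinal.mk (G ⧸ S) * Cardinal.mk S := e
      _ ≤ Cardinal.aleph0 * Cardinal.mk S := mul_le_mul' hq le_rfl
      _ = Cardinal.mk S := by
          rw [Cardinal.mul_eq_max le_rfl hSbig, max_eq_right hSbig]
  have h2 : Cardinal.mk S ≤ Cardinal.mk G :=
    Cardinal.mk_le_of_injective Subtype.val_injective
  exact le_antisymm h2 h1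
end

section
/- Let G be an abelian group and τ, τ' transversal group topologies on G. If φ and ψ are group topologies with τ' ≤ φ and τ' ≤ ψ and τ ⊓ φ = τ ⊓ ψ, then φ = ψ. In particular, for any family (τᵢ) of pairwise distinct group topologies all finer than τ', the group topologies (τ ⊓ τᵢ) are pairwise distinct. -/
open Filter Set Pointwise

namespace Stmt9Aux

variable {G : Type*} [AddCommGroup G]

/-- The neighborhood filter of `0` of a group topology. -/
def nz (a : AddGroupTopology G) : Filter G := @nhds G a.toTopologicalSpace 0

theorem nz_mono {a b : AddGroupTopology G} (h : a ≤ b) : nz a ≤ nz b :=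
  nhds_mono h

theorem zero_mem_of_mem_nz {a : AddGroupTopology G} {U : Set G} (h : U ∈ nz a) : (0 : G) ∈ U := by
  letI := a.toTopologicalSpace
  exact mem_of_mem_nhds h

theorem nz_add {a : AddGroupTopology G} {U : Set G} (h : U ∈ nz a) :
    ∃ V ∈ nz a, V + V ⊆ U := by
  letI := a.toTopologicalSpace
  haveI := a.toIsTopologicalAddGroup
  rcases exists_nhds_zero_half h with ⟨V, hV, hVV⟩
  refine ⟨V, hV, ?_⟩
  rintro x hx
  rcases Set.mem_add.1 hx with ⟨v, hv, w, hw, rfl⟩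
  exact hVV v hv w hw

theorem nz_neg {a : AddGroupTopology G} {U : Set G} (h : U ∈ nz a) :
    ∃ V ∈ nz a, V ⊆ (fun x => -x) ⁻¹' U := by
  letI := a.toTopologicalSpace
  haveI := a.toIsTopologicalAddGroup
  have hc : Filter.Tendsto (fun x : G => -x) (nhds 0) (nhds (-(0 : G))) :=
    continuous_neg.tendsto 0
  rw [neg_zero] at hc
  exact ⟨_, hc h, subset_rfl⟩

theorem nz_sub {a : AddGroupTopology G} {U : Set G} (h : U ∈ nz a) :
    ∃ V ∈ nz a, ∀ v ∈ V, ∀ w ∈ V, v - w ∈ U := by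
  letI := a.toTopologicalSpace
  haveI := a.toIsTopologicalAddGroup
  exact exists_nhds_half_neg h

/-- The filter basis of the supremum (in mathlib's order) of two group topologies:
sets of the form `U + W` with `U` a `nhds 0` of `a` and `W` a `nhds 0` of `b`. -/
def supBasis (a b : AddGroupTopology G) : AddGroupFilterBasis G :=
  addGroupFilterBasisOfComm {s : Set G | ∃ U ∈ nz a, ∃ W ∈ nz b, s = U + W}
    ⟨univ + univ, univ, univ_mem, univ, univ_mem, rfl⟩
    (by
      rintro _ _ ⟨U, hU, W, hW, rfl⟩ ⟨U', hU', W', hW', rfl⟩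
      refine ⟨(U ∩ U') + (W ∩ W'), ⟨U ∩ U', inter_mem hU hU', W ∩ W', inter_mem hW hW', rfl⟩, ?_⟩
      rintro x hx
      rcases Set.mem_add.1 hx with ⟨u, hu, w, hw, rfl⟩
      exact ⟨Set.mem_add.2 ⟨u, hu.1, w, hw.1, rfl⟩, Set.mem_add.2 ⟨u, hu.2, w, hw.2, rfl⟩⟩)
    (by
      rintro _ ⟨U, hU, W, hW, rfl⟩
      exact Set.mem_add.2 ⟨0, zero_mem_of_mem_nz hU, 0, zero_mem_of_mem_nz hW, add_zero 0⟩)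
    (by
      rintro _ ⟨U, hU, W, hW, rfl⟩
      rcases nz_add hU with ⟨U₂, hU₂, hU₂U⟩
      rcases nz_add hW with ⟨W₂, hW₂, hW₂W⟩
      refine ⟨U₂ + W₂, ⟨U₂, hU₂, W₂, hW₂, rfl⟩, ?_⟩
      rintro x hx
      rcases Set.mem_add.1 hx with ⟨y, hy, z, hz, rfl⟩
      rcases Set.mem_add.1 hy with ⟨u, hu, w, hw, rfl⟩
      rcases Set.mem_add.1 hz with ⟨u', hu', w', hw', rfl⟩
      refine Set.mem_add.2 ⟨u + u', hU₂U (Set.mem_add.2 ⟨u, hu, u', hu', rfl⟩),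
        w + w', hW₂W (Set.mem_add.2 ⟨w, hw, w', hw', rfl⟩), by abel⟩)
    (by
      rintro _ ⟨U, hU, W, hW, rfl⟩
      rcases nz_neg hU with ⟨U₂, hU₂, hU₂U⟩
      rcases nz_neg hW with ⟨W₂, hW₂, hW₂W⟩
      refine ⟨U₂ + W₂, ⟨U₂, hU₂, W₂, hW₂, rfl⟩, ?_⟩
      rintro x hx
      rcases Set.mem_add.1 hx with ⟨u, hu, w, hw, rfl⟩
      exact Set.mem_add.2 ⟨-u, hU₂U hu, -w, hW₂W hw, (neg_add u w).symm⟩)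

/-- The group topology whose neighborhoods of `0` are generated by `supBasis a b`. -/
def supTop (a b : AddGroupTopology G) : AddGroupTopology G where
  toTopologicalSpace := (supBasis a b).topology
  toIsTopologicalAddGroup := (supBasis a b).isTopologicalAddGroup

theorem le_supTop_left (a b : AddGroupTopology G) : a ≤ supTop a b := by
  rw [← AddGroupTopology.toTopologicalSpace_le]
  refine le_of_nhds_le_nhds fun x => ?_
  refine (((supBasis a b).nhds_hasBasis x).ge_iff).2 ?_
  rintro _ ⟨U, hU, W, hW, rfl⟩
  letI := a.toTopologicalSpace
  haveI := a.toIsTopologicalAddGroup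
  have hUW : U + W ∈ nhds (0 : G) := by
    refine mem_of_superset hU fun u hu => Set.mem_add.2 ⟨u, hu, 0, zero_mem_of_mem_nz hW, add_zero u⟩
  rw [← map_add_left_nhds_zero x]
  exact image_mem_map hUW

theorem le_supTop_right (a b : AddGroupTopology G) : b ≤ supTop a b := by
  rw [← AddGroupTopology.toTopologicalSpace_le]
  refine le_of_nhds_le_nhds fun x => ?_
  refine (((supBasis a b).nhds_hasBasis x).ge_iff).2 ?_
  rintro _ ⟨U, hU, W, hW, rfl⟩
  letI := b.toTopologicalSpace
  haveI := b.toIsTopologicalAddGroup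
  have hUW : U + W ∈ nhds (0 : G) := by
    refine mem_of_superset hW fun w hw =>
      Set.mem_add.2 ⟨0, zero_mem_of_mem_nz hU, w, hw, zero_add w⟩
  rw [← map_add_left_nhds_zero x]
  exact image_mem_map hUW

/-- `U + W` is a neighborhood of `0` for the supremum of two group topologies. -/
theorem add_mem_nz_sup {a b : AddGroupTopology G} {U W : Set G}
    (hU : U ∈ nz a) (hW : W ∈ nz b) : U + W ∈ nz (a ⊔ b) := by
  have hle : a ⊔ b ≤ supTop a b := sup_le (le_supTop_left a b) (le_supTop_right a b)
  refine nz_mono hle ?_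
  exact (supBasis a b).mem_nhds_zero ⟨U, hU, W, hW, rfl⟩

theorem nz_inf (a b : AddGroupTopology G) : nz (a ⊓ b) = nz a ⊓ nz b := by
  have : (a ⊓ b).toTopologicalSpace = a.toTopologicalSpace ⊓ b.toTopologicalSpace :=
    AddGroupTopology.toTopologicalSpace_inf a b
  unfold nz
  rw [this]
  exact nhds_inf

/-- The key lemma: if `τ ⊓ τ' = ⊥` and `φ ≤ τ'`, then `τ' ⊓ (τ ⊔ φ) = φ`. -/
theorem inf_sup_eq (τ τ' φ : AddGroupTopology G) (htrans : τ ⊓ τ' = ⊥) (hφ : φ ≤ τ') :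
    τ' ⊓ (τ ⊔ φ) = φ := by
  -- extract the transversality witness
  have hbot : nz τ ⊓ nz τ' = pure (0 : G) := by
    rw [← nz_inf, htrans]
    show @nhds G (⊥ : AddGroupTopology G).toTopologicalSpace 0 = pure 0
    rw [AddGroupTopology.toTopologicalSpace_bot]
    haveI := discreteTopology_bot G
    rw [nhds_discrete]
  obtain ⟨U, hU, V, hV, hUV⟩ : ∃ U ∈ nz τ, ∃ V ∈ nz τ', U ∩ V ⊆ {(0 : G)} := by
    have h0 : {(0 : G)} ∈ nz τ ⊓ nz τ' := by rw [hbot]; exact rfl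
    rcases Filter.mem_inf_iff.1 h0 with ⟨U, hU, V, hV, hUVeq⟩
    exact ⟨U, hU, V, hV, hUVeq ▸ subset_rfl⟩
  -- reduce to equality of neighborhood filters at 0
  apply AddGroupTopology.toTopologicalSpace_injective
  refine IsTopologicalAddGroup.ext (τ' ⊓ (τ ⊔ φ)).toIsTopologicalAddGroup φ.toIsTopologicalAddGroup ?_
  show nz (τ' ⊓ (τ ⊔ φ)) = nz φ
  rw [nz_inf]
  refine le_antisymm ?_ (le_inf (nz_mono hφ) (nz_mono le_sup_right))
  -- the hard direction: every φ-neighborhood of 0 contains `V₂ ∩ (U + (W ∩ V₂))`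
  intro W hW
  obtain ⟨V₂, hV₂, hsub⟩ : ∃ V₂ ∈ nz τ', ∀ v ∈ V₂, ∀ w ∈ V₂, v - w ∈ V := nz_sub hV
  have hV₂φ : V₂ ∈ nz φ := nz_mono hφ hV₂
  have hW₁ : W ∩ V₂ ∈ nz φ := inter_mem hW hV₂φ
  have hS : U + (W ∩ V₂) ∈ nz (τ ⊔ φ) := add_mem_nz_sup hU hW₁
  refine mem_of_superset (inter_mem_inf hV₂ hS) ?_
  rintro x ⟨hxV₂, hxS⟩
  rcases Set.mem_add.1 hxS with ⟨u, hu, w, hw, rfl⟩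
  have huV : u ∈ V := by
    have : (u + w) - w ∈ V := hsub (u + w) hxV₂ w hw.2
    simpa using this
  have hu0 : u = 0 := hUV ⟨hu, huV⟩
  have : u + w = w := by rw [hu0, zero_add]
  rw [this]
  exact hw.1

end Stmt9Aux

/- Mathlib order is reverse inclusion: transversal is `τ ⊓ τ' = ⊥`, the paper's
"τ' ≤ σ" is `σ ≤ τ'`, the paper's "τ ⊓ σ" is `τ ⊔ σ`.  Injectivity of
`σ ↦ τ ⊔ σ` on topologies finer than `τ'`, plus the family version. -/
theorem stmt9 {G : Type*} [AddCommGroup G] (τ τ' : AddGroupTopology G)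
    (htrans : τ ⊓ τ' = ⊥) :
    (∀ φ ψ : AddGroupTopology G, φ ≤ τ' → ψ ≤ τ' → τ ⊔ φ = τ ⊔ ψ → φ = ψ) ∧
    ∀ (ι : Type) (t : ι → AddGroupTopology G), (∀ i, t i ≤ τ') →
      Function.Injective t → Function.Injective (fun i => τ ⊔ t i) := by
  have key : ∀ φ ψ : AddGroupTopology G, φ ≤ τ' → ψ ≤ τ' → τ ⊔ φ = τ ⊔ ψ → φ = ψ := by
    intro φ ψ hφ hψ h
    have h1 := Stmt9Aux.inf_sup_eq τ τ' φ htrans hφ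
    have h2 := Stmt9Aux.inf_sup_eq τ τ' ψ htrans hψ
    rw [← h1, ← h2, h]
  refine ⟨key, ?_⟩
  intro ι t ht hinj i j hij
  exact hinj (key (t i) (t j) (ht i) (ht j) hij)
end

section
/- Let G be a countable abelian group with a nondiscrete Hausdorff group topology τ having a countable neighborhood base at 0, and suppose τ' is a Hausdorff group topology transversal to τ. Then τ' can be weakened to a Hausdorff group topology τ'' ≤ τ' that is still transversal to τ and is first countable (has a countable neighborhood base at 0). -/
/-!
Write `τ'` for the Hausdorff group topology and `W` for a `τ'`-neighbourhood of `0` with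
`U ∩ W = {0}` for some `τ`-neighbourhood `U`. Enumerating `G = {g₀, g₁, …}`, choose symmetric
`τ'`-neighbourhoods `V₀ ⊆ W` with `Vₙ₊₁ + Vₙ₊₁ ⊆ Vₙ` and `gₙ ∉ Vₙ` for `gₙ ≠ 0`. They form a
basis at `0` of a group topology `τ''` coarser than `τ'`: it is first countable, Hausdorff since
`⋂ Vₙ = {0}`, and transversal to `τ` because `U ∩ V₀ = {0}`.
-/

open Filter Set Topology Pointwise

section IsTopologicalAddGroup

variable {G : Type*} [AddGroup G] [TopologicalSpace G] [IsTopologicalAddGroup G]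

theorem exists_nhds_zero_neg_mem_add_subset {U : Set G} (hU : U ∈ 𝓝 0) :
    ∃ V ∈ 𝓝 (0 : G), (∀ x ∈ V, -x ∈ V) ∧ V + V ⊆ U := by
  obtain ⟨V, hV, hsub⟩ := exists_nhds_half_neg hU
  refine ⟨V ∩ -V, inter_mem hV (neg_mem_nhds_zero G hV),
    fun x hx => ⟨hx.2, by simpa using hx.1⟩, ?_⟩
  rintro _ ⟨x, hx, y, hy, rfl⟩
  simpa using hsub x hx.1 (-y) hy.2

theorem exists_seq_nhds_zero_neg_mem_add_subset {W : ℕ → Set G} (hW : ∀ n, W n ∈ 𝓝 0) :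
    ∃ V : ℕ → Set G, (∀ n, V n ∈ 𝓝 0) ∧ (∀ n, ∀ x ∈ V n, -x ∈ V n) ∧
      (∀ n, V (n + 1) + V (n + 1) ⊆ V n) ∧ ∀ n, V n ⊆ W n := by
  choose! half half_mem half_neg half_add using
    fun U (hU : U ∈ 𝓝 (0 : G)) => exists_nhds_zero_neg_mem_add_subset hU
  let U : ℕ → Set G := fun n => Nat.rec univ (fun k Uk => half (Uk ∩ W k)) n
  have U_mem : ∀ n, U n ∈ 𝓝 0 := by
    intro n
    induction n with
    | zero => exact univ_mem
    | succ n ih => exact half_mem _ (inter_mem ih (hW n))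
  have U_add : ∀ n, U (n + 1) + U (n + 1) ⊆ U n ∩ W n := fun n =>
    half_add _ (inter_mem (U_mem n) (hW n))
  refine ⟨fun n => U (n + 1), fun n => U_mem (n + 1),
    fun n => half_neg _ (inter_mem (U_mem n) (hW n)),
    fun n => (U_add (n + 1)).trans inter_subset_left, fun n => ?_⟩
  exact (subset_add_left (U (n + 1)) (mem_of_mem_nhds (U_mem (n + 1)))).trans
    ((U_add n).trans inter_subset_right)

end IsTopologicalAddGroup

namespace AddGroupTopology

section AddGroup

variable {G : Type*} [AddGroup G]

theorem le_iff_nhds_zero {t t' : AddGroupTopology G} :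
    t ≤ t' ↔ @nhds G t.toTopologicalSpace 0 ≤ @nhds G t'.toTopologicalSpace 0 := by
  rw [← toTopologicalSpace_le]
  refine ⟨fun h => nhds_mono h, fun h => (le_iff_nhds _ _).2 fun x => ?_⟩
  rw [← @nhds_translation_add_neg G t.toTopologicalSpace _ t.toIsTopologicalAddGroup x,
    ← @nhds_translation_add_neg G t'.toTopologicalSpace _ t'.toIsTopologicalAddGroup x]
  exact comap_mono h

theorem inf_eq_bot_iff {t t' : AddGroupTopology G} :
    t ⊓ t' = ⊥ ↔ {0} ∈ @nhds G t.toTopologicalSpace 0 ⊓ @nhds G t'.toTopologicalSpace 0 := by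
  let := (t ⊓ t').toTopologicalSpace
  have := (t ⊓ t').toIsTopologicalAddGroup
  rw [← toTopologicalSpace_injective.eq_iff, toTopologicalSpace_bot, ← nhds_inf,
    ← toTopologicalSpace_inf]
  refine ⟨fun h => ?_, fun h => ?_⟩
  · have : DiscreteTopology G := ⟨h⟩
    exact isOpen_discrete _ |>.mem_nhds rfl
  · exact (discreteTopology_iff_isOpen_singleton_zero.2 (isOpen_singleton_iff_nhds_eq_pure _ |>.2
      (le_antisymm (le_pure_iff.2 h) (pure_le_nhds 0)))).eq_bot

end AddGroup

section AddCommGroup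

variable {G : Type*} [AddCommGroup G] {V : ℕ → Set G}

def ofNhdsZeroSeq (V : ℕ → Set G) (zero_mem : ∀ n, 0 ∈ V n) (neg_mem : ∀ n, ∀ x ∈ V n, -x ∈ V n)
    (add_subset : ∀ n, V (n + 1) + V (n + 1) ⊆ V n) : AddGroupTopology G :=
  have antitone : Antitone V := antitone_nat_of_succ_le fun n =>
    (subset_add_left _ (zero_mem _)).trans (add_subset n)
  let B : AddGroupFilterBasis G := addGroupFilterBasisOfComm (range V) (range_nonempty V)
    (by
      rintro _ _ ⟨m, rfl⟩ ⟨n, rfl⟩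
      exact ⟨V (max m n), mem_range_self _,
        subset_inter (antitone (le_max_left m n)) (antitone (le_max_right m n))⟩)
    (by rintro _ ⟨n, rfl⟩; exact zero_mem n)
    (by rintro _ ⟨n, rfl⟩; exact ⟨V (n + 1), mem_range_self _, add_subset n⟩)
    (by rintro _ ⟨n, rfl⟩; exact ⟨V n, mem_range_self _, neg_mem n⟩)
  ⟨B.topology, B.isTopologicalAddGroup⟩

variable {zero_mem : ∀ n, (0 : G) ∈ V n} {neg_mem : ∀ n, ∀ x ∈ V n, -x ∈ V n}
  {add_subset : ∀ n, V (n + 1) + V (n + 1) ⊆ V n}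

theorem nhds_zero_hasBasis_ofNhdsZeroSeq :
    (@nhds G (ofNhdsZeroSeq V zero_mem neg_mem add_subset).toTopologicalSpace 0).HasBasis
      (fun _ => True) V := by
  refine AddGroupFilterBasis.nhds_zero_hasBasis _ |>.to_hasBasis ?_ ?_
  · rintro _ ⟨n, rfl⟩
    exact ⟨n, trivial, subset_rfl⟩
  · exact fun n _ => ⟨V n, mem_range_self n, subset_rfl⟩

theorem t2Space_ofNhdsZeroSeq (sep : ∀ x ≠ 0, ∃ n, x ∉ V n) :
    @T2Space G (ofNhdsZeroSeq V zero_mem neg_mem add_subset).toTopologicalSpace := by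
  let t := ofNhdsZeroSeq V zero_mem neg_mem add_subset
  let := t.toTopologicalSpace
  have := t.toIsTopologicalAddGroup
  refine IsTopologicalAddGroup.t2Space_of_zero_sep fun x hx => ?_
  obtain ⟨n, hn⟩ := sep x hx
  exact ⟨V n, nhds_zero_hasBasis_ofNhdsZeroSeq.mem_of_mem trivial, hn⟩

theorem le_ofNhdsZeroSeq {t : AddGroupTopology G}
    (mem_nhds : ∀ n, V n ∈ @nhds G t.toTopologicalSpace 0) :
    t ≤ ofNhdsZeroSeq V zero_mem neg_mem add_subset :=
  le_iff_nhds_zero.2 <| nhds_zero_hasBasis_ofNhdsZeroSeq.ge_iff.2 fun n _ => mem_nhds n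

theorem exists_le_t2Space_mem_nhds_zero_isCountablyGenerated [Countable G]
    (t : AddGroupTopology G) (ht : @T2Space G t.toTopologicalSpace) {W : Set G}
    (hW : W ∈ @nhds G t.toTopologicalSpace 0) :
    ∃ s : AddGroupTopology G, t ≤ s ∧ @T2Space G s.toTopologicalSpace ∧
      W ∈ @nhds G s.toTopologicalSpace 0 ∧
      (@nhds G s.toTopologicalSpace 0).IsCountablyGenerated := by
  let := t.toTopologicalSpace
  have := t.toIsTopologicalAddGroup
  obtain ⟨f, hf⟩ := exists_surjective_nat G
  have sep_mem : ∀ n, W ∩ ({f n} \ {0})ᶜ ∈ 𝓝 (0 : G) := fun n =>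
    inter_mem hW ((finite_singleton _).sdiff.isClosed.compl_mem_nhds fun h => h.2 rfl)
  obtain ⟨V, V_mem, V_neg, V_add, V_sub⟩ := exists_seq_nhds_zero_neg_mem_add_subset sep_mem
  have hV := nhds_zero_hasBasis_ofNhdsZeroSeq (zero_mem := fun n => mem_of_mem_nhds (V_mem n))
    (neg_mem := V_neg) (add_subset := V_add)
  refine ⟨_, le_ofNhdsZeroSeq V_mem, t2Space_ofNhdsZeroSeq fun x hx => ?_,
    mem_of_superset (hV.mem_of_mem trivial) ((V_sub 0).trans inter_subset_left),
    hV.isCountablyGenerated⟩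
  obtain ⟨n, rfl⟩ := hf x
  exact ⟨n, fun hn => (V_sub n hn).2 ⟨rfl, hx⟩⟩

end AddCommGroup

end AddGroupTopology

/- Mathlib orders topologies by reverse inclusion: transversality is `τ ⊓ τ' = ⊥`, and
"τ'' coarser than τ'" is `τ' ≤ τ''`. -/
theorem stmt10_general {G : Type*} [AddCommGroup G] [Countable G]
    (τ τ' : AddGroupTopology G)
    (hT2' : @T2Space G τ'.toTopologicalSpace)
    (htrans : τ ⊓ τ' = ⊥) :
    ∃ τ'' : AddGroupTopology G, τ' ≤ τ'' ∧
      @T2Space G τ''.toTopologicalSpace ∧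
      τ ⊓ τ'' = ⊥ ∧
      (@nhds G τ''.toTopologicalSpace 0).IsCountablyGenerated := by
  obtain ⟨U, hU, W, hW, hUW⟩ := mem_inf_iff.1 (AddGroupTopology.inf_eq_bot_iff.1 htrans)
  obtain ⟨τ'', hle, hT2'', hW'', hcg⟩ :=
    τ'.exists_le_t2Space_mem_nhds_zero_isCountablyGenerated hT2' hW
  exact ⟨τ'', hle, hT2'', AddGroupTopology.inf_eq_bot_iff.2 (mem_inf_of_inter hU hW'' hUW.ge), hcg⟩

theorem stmt10 {G : Type*} [AddCommGroup G] [Countable G]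
    (τ τ' : AddGroupTopology G)
    (hnd : τ ≠ ⊥)
    (hT2 : @T2Space G τ.toTopologicalSpace)
    (hcb : (@nhds G τ.toTopologicalSpace 0).IsCountablyGenerated)
    (hT2' : @T2Space G τ'.toTopologicalSpace)
    (htrans : τ ⊓ τ' = ⊥) :
    ∃ τ'' : AddGroupTopology G, τ' ≤ τ'' ∧
      @T2Space G τ''.toTopologicalSpace ∧
      τ ⊓ τ'' = ⊥ ∧
      (@nhds G τ''.toTopologicalSpace 0).IsCountablyGenerated :=
  stmt10_general τ τ' hT2' htrans
end

section
/- For any abelian group G and any sequence (aₙ) in G, the supremum (in the lattice of group topologies on G) of all group topologies in which (aₙ) converges to 0 is itself a group topology in which (aₙ) converges to 0; i.e., there exists a finest group topology on G in which (aₙ) converges to 0. -/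
/- In Mathlib's reverse-inclusion order, the finest group topology in which
`a` converges to `0` is the least element of the set of such topologies. -/
theorem stmt14 {G : Type*} [AddCommGroup G] (a : ℕ → G) :
    ∃ τ : AddGroupTopology G,
      Filter.Tendsto a Filter.atTop (@nhds G τ.toTopologicalSpace 0) ∧
      ∀ σ : AddGroupTopology G,
        Filter.Tendsto a Filter.atTop (@nhds G σ.toTopologicalSpace 0) → τ ≤ σ := by
  set S : Set (AddGroupTopology G) :=
    {σ | Filter.Tendsto a Filter.atTop (@nhds G σ.toTopologicalSpace 0)} with hS
  refine ⟨sInf S, ?_, fun σ hσ => sInf_le hσ⟩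
  rw [AddGroupTopology.toTopologicalSpace_sInf, nhds_sInf, Filter.tendsto_iInf]
  intro t
  rw [Filter.tendsto_iInf]
  rintro ⟨σ, hσ, rfl⟩
  exact hσ
end
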